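/- Let G be a finite graph, let R ⊆ V(G) be the vertex set of an induced copy of P_3 in G, and let C be a clique of G with at most two vertices, disjoint from R, all of whose vertices have odd degree in G. Assume every vertex of R is adjacent to every vertex of C. Then there is a set Q ⊆ C ∪ R whose removal from G is admissible, such that C ⊆ Q and R \ Q is a clique of the remaining graph with at most two vertices, all of which have odd degree in the remaining graph. -/

import Mathlib

/-- The removal of `S` from the graph `G` restricted to the remaining vertex set `W` is simple
admissible: `S ⊆ W`, `S` is independent, and the number of edges between `S` and `W \ S`
is even. -/
def SimpleAdmissibleIn {V : Type*} (G : SimpleGraph V) (W S : Set V) : Prop :=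
  S ⊆ W ∧ (∀ u ∈ S, ∀ v ∈ S, ¬ G.Adj u v) ∧
    Even ({p : V × V | G.Adj p.1 p.2 ∧ p.1 ∈ S ∧ p.2 ∈ W \ S}.ncard)

/-- The removal of `S` from the graph `G` restricted to the remaining vertex set `W` is
admissible: it is realized by a sequence of simple admissible removals. -/
def AdmissibleIn {V : Type*} (G : SimpleGraph V) (W S : Set V) : Prop :=
  ∃ (k : ℕ) (Ss : ℕ → Set V),
    (∀ i < k, SimpleAdmissibleIn G (W \ ⋃ j ∈ Finset.range i, Ss j) (Ss i)) ∧
    (⋃ i ∈ Finset.range k, Ss i) = S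

/-- The removal of `S` from the graph `G` is admissible. -/
def Admissible {V : Type*} (G : SimpleGraph V) (S : Set V) : Prop :=
  AdmissibleIn G Set.univ S

/-- The degree of `v` in the graph `G` restricted to the remaining vertex set `W`. -/
noncomputable def degIn {V : Type*} (G : SimpleGraph V) (W : Set V) (v : V) : ℕ :=
  (G.neighborSet v ∩ W).ncard

/-- The path `P_3` with three edges (four vertices): `0 - 1 - 2 - 3`. -/
def P3 : SimpleGraph (Fin 4) where
  Adj x y := (x : ℕ) + 1 = y ∨ (y : ℕ) + 1 = x
  symm := ⟨by intro x y h; tauto⟩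
  loopless := ⟨by intro x h; rcases h with h | h <;> omega⟩

/-!
A vertex of `C` is adjacent to every other vertex of `C ∪ R`, so it can only be removed on its
own, once its degree has become even; and removing a vertex flips the degree parity of each of
its neighbours. Any triangle-free set, such as the path `R`, can be whittled down greedily to an
odd clique of at most two vertices: remove an even vertex if there is one, and otherwise two
non-adjacent odd ones. It therefore suffices to get rid of `C`. Before removing an apex `c ∈ C`
we remove one path vertex of even degree, which makes `c` even. With two apices, the second
path vertex must be even after the first two removals; a check over the 16 parity patterns of
the path finds a suitable pair unless all four path vertices are odd; in that case we first
remove the first and third path vertices together, after which the fourth one is even.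
-/

open SimpleGraph

section Resolution

variable {V : Type*} {G : SimpleGraph V} {W S : Set V} {u v w : V}

lemma degIn_univ (v : V) : degIn G Set.univ v = (G.neighborSet v).ncard := by
  simp [degIn]

lemma degIn_sdiff_singleton_of_not_adj (h : ¬G.Adj v u) : degIn G (W \ {u}) v = degIn G W v := by
  unfold degIn
  congr 1
  ext x
  simp only [Set.mem_inter_iff, mem_neighborSet, Set.mem_sdiff, Set.mem_singleton_iff]
  exact ⟨fun h' => ⟨h'.1, h'.2.1⟩, fun h' => ⟨h'.1, h'.2, by rintro rfl; exact h h'.1⟩⟩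

lemma degIn_sdiff_singleton_add_one [Finite V] (hu : u ∈ W) (h : G.Adj v u) :
    degIn G (W \ {u}) v + 1 = degIn G W v := by
  unfold degIn
  have huN : u ∈ G.neighborSet v ∩ W := ⟨h, hu⟩
  rw [← Set.inter_sdiff_assoc, Set.ncard_sdiff_singleton_add_one huN]

lemma even_degIn_sdiff_singleton_iff [Finite V] (hu : u ∈ W) (h : G.Adj v u) :
    Even (degIn G (W \ {u}) v) ↔ Odd (degIn G W v) := by
  rw [← degIn_sdiff_singleton_add_one hu h, Nat.odd_add_one, Nat.not_odd_iff_even]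

lemma odd_degIn_sdiff_singleton_iff [Finite V] (hu : u ∈ W) (h : G.Adj v u) :
    Odd (degIn G (W \ {u}) v) ↔ Even (degIn G W v) := by
  rw [← degIn_sdiff_singleton_add_one hu h, Nat.even_add_one, Nat.not_even_iff_odd]

lemma setOf_adj_mem_sdiff_eq_biUnion (hS : ∀ u ∈ S, ∀ v ∈ S, ¬G.Adj u v) :
    {p : V × V | G.Adj p.1 p.2 ∧ p.1 ∈ S ∧ p.2 ∈ W \ S} =
      ⋃ s ∈ S, Prod.mk s '' (G.neighborSet s ∩ W) := by
  ext ⟨x, y⟩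
  simp only [Set.mem_ofPred_eq, Set.mem_sdiff, Set.mem_iUnion, Set.mem_image, Set.mem_inter_iff,
    mem_neighborSet, Prod.mk.injEq, exists_prop]
  constructor
  · rintro ⟨hxy, hx, hy, -⟩
    exact ⟨x, hx, y, ⟨hxy, hy⟩, rfl, rfl⟩
  · rintro ⟨s, hs, y, ⟨hsy, hy⟩, rfl, rfl⟩
    exact ⟨hsy, hs, hy, fun hyS => hS s hs y hyS hsy⟩

lemma simpleAdmissibleIn_singleton [Finite V] (hv : v ∈ W) (h : Even (degIn G W v)) :
    SimpleAdmissibleIn G W {v} := by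
  have hS : ∀ a ∈ ({v} : Set V), ∀ b ∈ ({v} : Set V), ¬G.Adj a b := by
    rintro a rfl b rfl; exact G.irrefl
  refine ⟨Set.singleton_subset_iff.2 hv, hS, ?_⟩
  rw [setOf_adj_mem_sdiff_eq_biUnion hS, Set.biUnion_singleton,
    Set.ncard_image_of_injective _ (Prod.mk_right_injective v)]
  exact h

lemma simpleAdmissibleIn_pair [Finite V] (hu : u ∈ W) (hw : w ∈ W) (huw : u ≠ w)
    (hadj : ¬G.Adj u w) (h : Even (degIn G W u + degIn G W w)) :
    SimpleAdmissibleIn G W {u, w} := by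
  have hS : ∀ a ∈ ({u, w} : Set V), ∀ b ∈ ({u, w} : Set V), ¬G.Adj a b := by
    rintro a (rfl | rfl) b (rfl | rfl)
    exacts [G.irrefl, hadj, fun h' => hadj h'.symm, G.irrefl]
  refine ⟨Set.insert_subset hu (Set.singleton_subset_iff.2 hw), hS, ?_⟩
  rw [setOf_adj_mem_sdiff_eq_biUnion hS, Set.biUnion_insert, Set.biUnion_singleton,
    Set.ncard_union_eq,
    Set.ncard_image_of_injective _ (Prod.mk_right_injective u),
    Set.ncard_image_of_injective _ (Prod.mk_right_injective w)]
  · exact h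
  · rw [Set.disjoint_left]
    rintro _ ⟨_, -, rfl⟩ ⟨_, -, h'⟩
    exact huw (congrArg Prod.fst h').symm

lemma AdmissibleIn.empty (W : Set V) : AdmissibleIn G W ∅ :=
  ⟨0, fun _ => ∅, by simp, by simp⟩

lemma AdmissibleIn.cons {T : Set V} (hS : SimpleAdmissibleIn G W S)
    (hT : AdmissibleIn G (W \ S) T) : AdmissibleIn G W (S ∪ T) := by
  obtain ⟨k, Ss, hstep, rfl⟩ := hT
  let Ss' : ℕ → Set V := fun i => if i = 0 then S else Ss (i - 1)
  have hunion : ∀ m, ⋃ j ∈ Finset.range (m + 1), Ss' j = S ∪ ⋃ j ∈ Finset.range m, Ss j := by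
    intro m
    ext x
    simp only [Set.mem_iUnion, Finset.mem_range, Set.mem_union, exists_prop]
    constructor
    · rintro ⟨_ | j, hj, hx⟩
      · exact Or.inl hx
      · exact Or.inr ⟨j, by omega, hx⟩
    · rintro (hx | ⟨j, hj, hx⟩)
      · exact ⟨0, by omega, hx⟩
      · exact ⟨j + 1, by omega, hx⟩
  refine ⟨k + 1, Ss', fun i hi => ?_, hunion k⟩
  rcases i with _ | i
  · simpa [Ss'] using hS
  · rw [hunion, ← Set.sdiff_sdiff]
    exact hstep i (by omega)

def Resolvable (G : SimpleGraph V) (W K X : Set V) : Prop :=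
  ∃ Q ⊆ K ∪ X, AdmissibleIn G W Q ∧ K ⊆ Q ∧ G.IsClique (X \ Q) ∧ (X \ Q).ncard ≤ 2 ∧
    ∀ v ∈ X \ Q, Odd (degIn G (W \ Q) v)

lemma SimpleAdmissibleIn.resolvable_of {K X : Set V} (hS : SimpleAdmissibleIn G W S)
    (hSKX : S ⊆ K ∪ X) (h : Resolvable G (W \ S) (K \ S) (X \ S)) : Resolvable G W K X := by
  obtain ⟨Q, hQ, hadm, hKQ, hcl, hcard, hodd⟩ := h
  refine ⟨S ∪ Q, Set.union_subset hSKX (hQ.trans ?_), hadm.cons hS,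
    Set.sdiff_subset_iff.1 hKQ, ?_⟩
  · exact Set.union_subset_union Set.sdiff_subset Set.sdiff_subset
  · simpa only [← Set.sdiff_sdiff] using ⟨hcl, hcard, hodd⟩

lemma SimpleGraph.CliqueFreeOn.ncard_le_two [Finite V] {X : Set V} (hX : G.CliqueFreeOn X 3)
    (hcl : G.IsClique X) : X.ncard ≤ 2 := by
  by_contra! h
  obtain ⟨a, b, c, ha, hb, hc, hab, hac, hbc⟩ := (Set.two_lt_ncard_iff X.toFinite).1 h
  classical
  refine hX (t := {a, b, c}) ?_
    (is3Clique_triple_iff.2 ⟨hcl ha hb hab, hcl ha hc hac, hcl hb hc hbc⟩)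
  simp [Set.insert_subset_iff, ha, hb, hc]

theorem resolvable_of_cliqueFreeOn [Finite V] {X : Set V} (hXW : X ⊆ W)
    (hX : G.CliqueFreeOn X 3) : Resolvable G W ∅ X := by
  induction hn : X.ncard using Nat.strong_induction_on generalizing W X with
  | _ n ih =>
  have remove (S : Set V) (hSX : S ⊆ X) (hSne : S.Nonempty) (hS : SimpleAdmissibleIn G W S) :
      Resolvable G W ∅ X := by
    refine hS.resolvable_of (by simpa using hSX) ?_
    rw [Set.empty_sdiff]
    exact ih _ (hn ▸ Set.ncard_lt_ncard (hSX.sdiff_ssubset_of_nonempty hSne))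
      (Set.sdiff_subset_sdiff_left hXW) (CliqueFreeOn.subset _ Set.sdiff_subset hX) rfl
  by_cases heven : ∃ v ∈ X, Even (degIn G W v)
  · obtain ⟨v, hv, he⟩ := heven
    exact remove {v} (Set.singleton_subset_iff.2 hv) (Set.singleton_nonempty v)
      (simpleAdmissibleIn_singleton (hXW hv) he)
  simp only [not_exists, not_and, Nat.not_even_iff_odd] at heven
  by_cases hcl : G.IsClique X
  · refine ⟨∅, Set.empty_subset _, AdmissibleIn.empty W, subset_rfl, ?_⟩
    simpa using ⟨hcl, hX.ncard_le_two hcl, heven⟩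
  obtain ⟨u, hu, w, hw, huw, hadj⟩ : ∃ u ∈ X, ∃ w ∈ X, u ≠ w ∧ ¬G.Adj u w := by
    simpa [IsClique, Set.Pairwise] using hcl
  exact remove {u, w} (Set.insert_subset hu (Set.singleton_subset_iff.2 hw))
    (Set.insert_nonempty _ _)
    (simpleAdmissibleIn_pair (hXW hu) (hXW hw) huw hadj ((heven u hu).add_odd (heven w hw)))

def IsOddApex (G : SimpleGraph V) (W X : Set V) (c : V) : Prop :=
  c ∈ W \ X ∧ (∀ v ∈ X, G.Adj v c) ∧ Odd (degIn G W c)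

lemma IsOddApex.sdiff_pair [Finite V] {X : Set V} {c : V} (hc : IsOddApex G W X c)
    (hXW : X ⊆ W) (hu : u ∈ X) (hw : w ∈ X) (huw : u ≠ w) :
    IsOddApex G (W \ {u, w}) (X \ {u, w}) c := by
  obtain ⟨⟨hcW, hcX⟩, hadj, hodd⟩ := hc
  have hcuw : c ∉ ({u, w} : Set V) := by rintro (rfl | rfl) <;> contradiction
  refine ⟨⟨⟨hcW, hcuw⟩, fun h => hcX h.1⟩, fun v hv => hadj v hv.1, ?_⟩
  rw [← Set.singleton_union, ← Set.sdiff_sdiff, odd_degIn_sdiff_singleton_iff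
    (show w ∈ W \ {u} from ⟨hXW hw, huw.symm⟩) (hadj w hw).symm,
    even_degIn_sdiff_singleton_iff (hXW hu) (hadj u hu).symm]
  exact hodd

theorem Resolvable.of_even_of_isOddApex [Finite V] {K X : Set V} {x c : V}
    (hKX : Disjoint K X) (hxX : x ∈ X) (hXW : X ⊆ W) (hcK : c ∈ K) (hc : IsOddApex G W X c)
    (hx : Even (degIn G W x)) (h : Resolvable G ((W \ {x}) \ {c}) (K \ {c}) (X \ {x})) :
    Resolvable G W K X := by
  obtain ⟨⟨hcW, hcX⟩, hadj, hodd⟩ := hc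
  have hxc : x ≠ c := fun hxc => hcX (hxc ▸ hxX)
  refine (simpleAdmissibleIn_singleton (hXW hxX) hx).resolvable_of (by simp [hxX]) ?_
  rw [Set.sdiff_singleton_eq_self (Set.disjoint_right.1 hKX hxX)]
  refine (simpleAdmissibleIn_singleton (W := W \ {x}) ⟨hcW, hxc.symm⟩ ?_).resolvable_of
    (by simp [hcK]) ?_
  · exact (even_degIn_sdiff_singleton_iff (hXW hxX) (hadj x hxX).symm).2 hodd
  · rwa [Set.sdiff_singleton_eq_self (s := X \ {x}) fun h => hcX h.1]

theorem resolvable_singleton_of_isOddApex [Finite V] {X : Set V} {x c : V}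
    (hX : G.CliqueFreeOn X 3) (hXW : X ⊆ W) (hc : IsOddApex G W X c) (hxX : x ∈ X)
    (hx : Even (degIn G W x)) : Resolvable G W {c} X := by
  refine .of_even_of_isOddApex (Set.disjoint_singleton_left.2 hc.1.2) hxX hXW rfl hc hx ?_
  rw [Set.sdiff_self]
  exact resolvable_of_cliqueFreeOn
    (fun v hv => ⟨⟨hXW hv.1, hv.2⟩, fun h => hc.1.2 (Set.mem_singleton_iff.1 h ▸ hv.1)⟩)
    (CliqueFreeOn.subset _ Set.sdiff_subset hX)

theorem resolvable_pair_of_isOddApex [Finite V] {X : Set V} {x y c d : V}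
    (hX : G.CliqueFreeOn X 3) (hXW : X ⊆ W) (hc : IsOddApex G W X c) (hd : IsOddApex G W X d)
    (hcd : G.Adj c d) (hxX : x ∈ X) (hyX : y ∈ X) (hxy : x ≠ y)
    (hx : Even (degIn G W x))
    -- `y` has even degree once `x` and `c` are removed
    (hy : G.Adj y x ↔ Even (degIn G W y)) :
    Resolvable G W {c, d} X := by
  obtain ⟨⟨hdW, hdX⟩, hdadj, hdodd⟩ := hd
  have hxW : x ∈ W := hXW hxX
  have hcW' : c ∈ W \ {x} := ⟨hc.1.1, fun h => hc.1.2 (Set.mem_singleton_iff.1 h ▸ hxX)⟩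
  have hKX : Disjoint ({c, d} : Set V) X := by
    rw [Set.disjoint_insert_left, Set.disjoint_singleton_left]
    exact ⟨hc.1.2, hdX⟩
  refine .of_even_of_isOddApex hKX hxX hXW (Set.mem_insert c _) hc hx ?_
  rw [Set.pair_sdiff_left hcd.ne]
  refine resolvable_singleton_of_isOddApex (CliqueFreeOn.subset _ Set.sdiff_subset hX) ?_ ?_
    (x := y) ⟨hyX, hxy.symm⟩ ?_
  · exact fun v hv => ⟨⟨hXW hv.1, hv.2⟩, fun h => hc.1.2 (Set.mem_singleton_iff.1 h ▸ hv.1)⟩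
  · refine ⟨⟨⟨⟨hdW, fun h => hdX (Set.mem_singleton_iff.1 h ▸ hxX)⟩, hcd.ne.symm⟩,
      fun h => hdX h.1⟩, fun v hv => hdadj v hv.1, ?_⟩
    rw [odd_degIn_sdiff_singleton_iff hcW' hcd.symm,
      even_degIn_sdiff_singleton_iff hxW (hdadj x hxX).symm]
    exact hdodd
  · rw [even_degIn_sdiff_singleton_iff hcW' (hc.2.1 y hyX)]
    by_cases hyx : G.Adj y x
    · exact (odd_degIn_sdiff_singleton_iff hxW hyx).2 (hy.1 hyx)
    · rw [degIn_sdiff_singleton_of_not_adj hyx, ← Nat.not_even_iff_odd]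
      exact mt hy.2 hyx

instance P3.decidableRelAdj : DecidableRel P3.Adj := fun x y =>
  decidable_of_iff ((x : ℕ) + 1 = y ∨ (y : ℕ) + 1 = x) Iff.rfl

lemma P3.cliqueFree_three : P3.CliqueFree 3 := by
  have no_triangle : ∀ a b c, P3.Adj a b → P3.Adj a c → P3.Adj b c → False := by decide
  intro t ht
  obtain ⟨a, b, c, hab, hac, hbc, -⟩ := is3Clique_iff.1 ht
  exact no_triangle a b c hab hac hbc

lemma P3.exists_even_and_adj_iff_even (even : Fin 4 → Bool) (h : ∃ i, even i) :
    ∃ i j, i ≠ j ∧ even i ∧ (P3.Adj j i ↔ even j) := by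
  revert even
  decide

lemma cliqueFreeOn_range_P3 (f : P3 ↪g G) : G.CliqueFreeOn (Set.range f) 3 :=
  (cliqueFree_induce_iff G _ 3).1 (P3.cliqueFree_three.comap f.isoInduceRange.symm.isContained)

section Path

variable [Finite V] {c d : V} (f : P3 ↪g G)

lemma remove_zero_two_of_forall_odd (hfW : Set.range f ⊆ W)
    (hodd : ∀ i, Odd (degIn G W (f i))) :
    SimpleAdmissibleIn G W {f 0, f 2} ∧ Even (degIn G (W \ {f 0, f 2}) (f 3)) ∧
      Odd (degIn G (W \ {f 0, f 2}) (f 1)) := by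
  have hW (i : Fin 4) : f i ∈ W := hfW (Set.mem_range_self i)
  have h20 : f 2 ∈ W \ {f 0} := ⟨hW 2, by simp⟩
  rw [← Set.singleton_union, ← Set.sdiff_sdiff]
  refine ⟨simpleAdmissibleIn_pair (hW 0) (hW 2) (by simp) (by rw [f.map_adj_iff]; decide)
    ((hodd 0).add_odd (hodd 2)), ?_, ?_⟩
  · rw [even_degIn_sdiff_singleton_iff h20 (by rw [f.map_adj_iff]; decide),
      degIn_sdiff_singleton_of_not_adj (by rw [f.map_adj_iff]; decide)]
    exact hodd 3
  · rw [odd_degIn_sdiff_singleton_iff h20 (by rw [f.map_adj_iff]; decide),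
      even_degIn_sdiff_singleton_iff (hW 0) (by rw [f.map_adj_iff]; decide)]
    exact hodd 1

lemma IsOddApex.sdiff_zero_two (hfW : Set.range f ⊆ W) (hc : IsOddApex G W (Set.range f) c) :
    IsOddApex G (W \ {f 0, f 2}) (Set.range f \ {f 0, f 2}) c :=
  hc.sdiff_pair hfW (Set.mem_range_self 0) (Set.mem_range_self 2) (by simp)

theorem resolvable_path_singleton (hfW : Set.range f ⊆ W) (hc : IsOddApex G W (Set.range f) c) :
    Resolvable G W {c} (Set.range f) := by
  have hX := cliqueFreeOn_range_P3 f
  by_cases heven : ∃ i, Even (degIn G W (f i))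
  · obtain ⟨i, hi⟩ := heven
    exact resolvable_singleton_of_isOddApex hX hfW hc (Set.mem_range_self i) hi
  simp only [not_exists, Nat.not_even_iff_odd] at heven
  have hsub : {f 0, f 2} ⊆ Set.range f := by simp [Set.insert_subset_iff]
  obtain ⟨h02, h3, -⟩ := remove_zero_two_of_forall_odd f hfW heven
  refine h02.resolvable_of (hsub.trans Set.subset_union_right) ?_
  rw [sdiff_eq_left (x := {c}).2 ((Set.disjoint_singleton_left.2 hc.1.2).mono_right hsub)]
  exact resolvable_singleton_of_isOddApex (CliqueFreeOn.subset _ Set.sdiff_subset hX)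
    (Set.sdiff_subset_sdiff_left hfW) (hc.sdiff_zero_two f hfW) ⟨Set.mem_range_self 3, by simp⟩
    h3

theorem resolvable_path_pair (hfW : Set.range f ⊆ W) (hc : IsOddApex G W (Set.range f) c)
    (hd : IsOddApex G W (Set.range f) d) (hcd : G.Adj c d) :
    Resolvable G W {c, d} (Set.range f) := by
  have hX := cliqueFreeOn_range_P3 f
  by_cases heven : ∃ i, Even (degIn G W (f i))
  · obtain ⟨i, j, hij, hi, hj⟩ := P3.exists_even_and_adj_iff_even
      (fun i => decide (Even (degIn G W (f i)))) (by simpa using heven)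
    refine resolvable_pair_of_isOddApex hX hfW hc hd hcd (Set.mem_range_self i)
      (Set.mem_range_self j) (f.injective.ne hij) (by simpa using hi) ?_
    simpa [f.map_adj_iff] using hj
  simp only [not_exists, Nat.not_even_iff_odd] at heven
  have hsub : {f 0, f 2} ⊆ Set.range f := by simp [Set.insert_subset_iff]
  obtain ⟨h02, h3, h1⟩ := remove_zero_two_of_forall_odd f hfW heven
  refine h02.resolvable_of (hsub.trans Set.subset_union_right) ?_
  rw [sdiff_eq_left (x := {c, d}).2 (Disjoint.mono_right hsub (by
    rw [Set.disjoint_insert_left, Set.disjoint_singleton_left]; exact ⟨hc.1.2, hd.1.2⟩))]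
  refine resolvable_pair_of_isOddApex (CliqueFreeOn.subset _ Set.sdiff_subset hX)
      (Set.sdiff_subset_sdiff_left hfW) (hc.sdiff_zero_two f hfW) (hd.sdiff_zero_two f hfW) hcd
      (x := f 3) (y := f 1) ⟨Set.mem_range_self 3, by simp⟩ ⟨Set.mem_range_self 1, by simp⟩
      (by simp) h3 (iff_of_false (by rw [f.map_adj_iff]; decide) (Nat.not_even_iff_odd.2 h1))

end Path

end Resolution

/-- Dense final step: `G[R]` induced copy of `P₃`, `C` a clique of at most two odd-degree
vertices disjoint from `R`, with `R` complete to `C`. Then there is an admissible removal from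
`C ∪ R` removing all of `C` and leaving from `R` a clique of at most two vertices, all of odd
degree in the remaining graph. -/
theorem dense_final_step {V : Type*} [Fintype V] (G : SimpleGraph V) (R C : Set V)
    (hiso : Nonempty (G.induce R ≃g P3))
    (hC : G.IsClique C) (hCm : C.ncard ≤ 2)
    (hdisj : Disjoint R C)
    (hodd : ∀ v ∈ C, Odd ((G.neighborSet v).ncard))
    (hcomp : ∀ u ∈ R, ∀ v ∈ C, G.Adj u v) :
    ∃ Q ⊆ C ∪ R, Admissible G Q ∧ C ⊆ Q ∧ G.IsClique (R \ Q) ∧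
      (R \ Q).ncard ≤ 2 ∧
      ∀ v ∈ R \ Q, Odd (degIn G (Set.univ \ Q) v) := by
  obtain ⟨e⟩ := hiso
  let f : P3 ↪g G := (Embedding.induce R).comp e.symm.toEmbedding
  have hf : Set.range f = R := by
    change Set.range (Subtype.val ∘ e.symm) = R
    rw [e.symm.surjective.range_comp, Subtype.range_coe]
  have hapex (c : V) (hc : c ∈ C) : IsOddApex G Set.univ (Set.range f) c := by
    rw [hf]
    exact ⟨⟨trivial, Set.disjoint_right.1 hdisj hc⟩, fun v hv => hcomp v hv c hc,
      (degIn_univ c).symm ▸ hodd c hc⟩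
  change Resolvable G Set.univ C R
  rw [← hf]
  interval_cases hcard : C.ncard
  · rw [(Set.ncard_eq_zero C.toFinite).1 hcard]
    exact resolvable_of_cliqueFreeOn (Set.subset_univ _) (cliqueFreeOn_range_P3 f)
  · obtain ⟨c, rfl⟩ := Set.ncard_eq_one.1 hcard
    exact resolvable_path_singleton f (Set.subset_univ _) (hapex c rfl)
  · obtain ⟨c, d, hcd, rfl⟩ := Set.ncard_eq_two.1 hcard
    exact resolvable_path_pair f (Set.subset_univ _) (hapex c (by simp)) (hapex d (by simp))
      (hC (by simp) (by simp) hcd)
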